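/- Let V_1, ..., V_k be 2-dimensional vector spaces (k ≥ 2) over an algebraically closed field, and let p = v_1 ⊗ ... ⊗ v_k, q = w_1 ⊗ ... ⊗ w_k be nonzero simple tensors such that the affine tangent spaces to the Segre cone at p and at q are equal. Then p and q are proportional. -/

import Mathlib

/-!
Suppose some `w j` is not a multiple of `v j` and pick `i ≠ j`. Choose functionals `f m` on the
factors with `f i (v i) = 0 ≠ f i u` for some `u`, `f j (v j) = 0 ≠ f j (w j)`, and `f m (w m) ≠ 0`
otherwise. The product functional `⊗ f m` kills every generator of the tangent space at `v`,
since each of them still has `v i` or `v j` as a factor, but it does not kill the generator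
`w₁ ⊗ ⋯ ⊗ u ⊗ ⋯ ⊗ w_k` of the tangent space at `w`. Hence every `w j` is a multiple of `v j`.
-/

open scoped TensorProduct
open Module

/-- The affine tangent space to the Segre cone at the simple tensor `⨂ₜ i, v i`. -/
noncomputable def segreTangent (K : Type*) [Field K] {ι : Type*} [DecidableEq ι]
    (V : ι → Type*) [∀ i, AddCommGroup (V i)] [∀ i, Module K (V i)] (v : ∀ i, V i) :
    Submodule K (⨂[K] i, V i) :=
  Submodule.span K
    {t | ∃ (i : ι) (w : V i), t = PiTensorProduct.tprod K (Function.update v i w)}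

lemma Module.exists_dual_apply_eq_zero_and_ne_zero {K V : Type*} [Field K] [AddCommGroup V]
    [Module K V] {x y : V} (hx : x ∉ K ∙ y) : ∃ f : Dual K V, f y = 0 ∧ f x ≠ 0 := by
  obtain ⟨f, hfx, hf⟩ := Submodule.exists_dual_map_eq_bot_of_notMem hx inferInstance
  refine ⟨f, ?_, hfx⟩
  simpa [Submodule.map_span] using hf

section

variable {K : Type*} [Field K] {ι : Type*} [Fintype ι] [DecidableEq ι] {V : ι → Type*}
  [∀ i, AddCommGroup (V i)] [∀ i, Module K (V i)]

open PiTensorProduct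

lemma segreTangent_le_ker_dualDistrib {v : ∀ i, V i} {f : ∀ i, Dual K (V i)} {i j : ι}
    (hij : i ≠ j) (hi : f i (v i) = 0) (hj : f j (v j) = 0) :
    segreTangent K V v ≤ LinearMap.ker (dualDistrib (⨂ₜ[K] m, f m)) := by
  rw [segreTangent, Submodule.span_le]
  rintro _ ⟨l, u, rfl⟩
  obtain ⟨m, hml, hm⟩ : ∃ m, m ≠ l ∧ f m (v m) = 0 := by
    rcases eq_or_ne i l with rfl | hil
    · exact ⟨j, hij.symm, hj⟩
    · exact ⟨i, hil, hi⟩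
  simp only [SetLike.mem_coe, LinearMap.mem_ker, dualDistrib_apply]
  exact Finset.prod_eq_zero (Finset.mem_univ m) (by rwa [Function.update_of_ne hml])

lemma mem_span_singleton_of_segreTangent_le [Nontrivial ι] {v w : ∀ i, V i}
    (hv : ∀ i, (K ∙ v i) ≠ ⊤) (hw : ∀ i, w i ≠ 0)
    (h : segreTangent K V w ≤ segreTangent K V v) (j : ι) : w j ∈ K ∙ v j := by
  by_contra hj
  obtain ⟨i, hij⟩ := exists_ne j
  obtain ⟨u, hu⟩ : ∃ u, u ∉ K ∙ v i := by
    simpa [Submodule.eq_top_iff'] using hv i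
  obtain ⟨fi, hfi, hfiu⟩ := exists_dual_apply_eq_zero_and_ne_zero hu
  obtain ⟨fj, hfj, hfjw⟩ := exists_dual_apply_eq_zero_and_ne_zero hj
  choose g hg using fun m => Projective.exists_dual_ne_zero K (hw m)
  let f := Function.update (Function.update g j fj) i fi
  have hf : ∀ m, f m (Function.update w i u m) ≠ 0 := by
    intro m
    rcases eq_or_ne m i with rfl | hmi
    · simpa [f] using hfiu
    rcases eq_or_ne m j with rfl | hmj
    · simpa [f, hmi] using hfjw
    · simpa [f, hmi, hmj] using hg m
  have hmem : tprod K (Function.update w i u) ∈ segreTangent K V v :=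
    h (Submodule.subset_span ⟨i, u, rfl⟩)
  have hker := segreTangent_le_ker_dualDistrib (f := f) hij (by simpa [f] using hfi)
    (by simpa [f, hij.symm] using hfj) hmem
  rw [LinearMap.mem_ker, dualDistrib_apply] at hker
  exact Finset.prod_ne_zero_iff.mpr (fun m _ => hf m) hker

lemma exists_tprod_eq_smul_tprod_of_segreTangent_le [Nontrivial ι] {v w : ∀ i, V i}
    (hv : ∀ i, (K ∙ v i) ≠ ⊤) (hw : ∀ i, w i ≠ 0)
    (h : segreTangent K V w ≤ segreTangent K V v) :
    ∃ c : K, tprod K w = c • tprod K v := by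
  choose c hc using fun j =>
    Submodule.mem_span_singleton.mp (mem_span_singleton_of_segreTangent_le hv hw h j)
  refine ⟨∏ j, c j, ?_⟩
  rw [← MultilinearMap.map_smul_univ]
  exact congrArg _ (funext hc).symm

end

lemma Submodule.span_singleton_ne_top_of_one_lt_finrank {K V : Type*} [Field K] [AddCommGroup V]
    [Module K V] (hV : 1 < finrank K V) (x : V) : (K ∙ x) ≠ ⊤ := by
  intro htop
  have := finrank_span_le_card (R := K) ({x} : Set V)
  rw [htop, finrank_top] at this
  simp only [Set.toFinset_singleton, Finset.card_singleton] at this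
  omega

theorem stmt11_general {K : Type*} [Field K] {k : ℕ} (hk : 2 ≤ k)
    (V : Fin k → Type*) [∀ i, AddCommGroup (V i)] [∀ i, Module K (V i)]
    (hdim : ∀ i, finrank K (V i) = 2)
    (v w : ∀ i, V i) (hw : ∀ i, w i ≠ 0)
    (h : segreTangent K V v = segreTangent K V w) :
    ∃ c : K, PiTensorProduct.tprod K w = c • PiTensorProduct.tprod K v := by
  have : Nontrivial (Fin k) := Fin.nontrivial_iff_two_le.mpr hk
  exact exists_tprod_eq_smul_tprod_of_segreTangent_le
    (fun i => Submodule.span_singleton_ne_top_of_one_lt_finrank (by rw [hdim]; norm_num) (v i))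
    hw h.ge

/-- for `k ≥ 2` two-dimensional vector spaces over an algebraically
closed field and nonzero simple tensors `p = v₁⊗...⊗v_k`, `q = w₁⊗...⊗w_k`, if the
affine tangent spaces to the Segre cone at `p` and `q` are equal, then `p` and `q`
are proportional. -/
theorem stmt11 {K : Type*} [Field K] [IsAlgClosed K] {k : ℕ} (hk : 2 ≤ k)
    (V : Fin k → Type*) [∀ i, AddCommGroup (V i)] [∀ i, Module K (V i)]
    [∀ i, FiniteDimensional K (V i)] (hdim : ∀ i, finrank K (V i) = 2)
    (v w : ∀ i, V i) (hv : ∀ i, v i ≠ 0) (hw : ∀ i, w i ≠ 0)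
    (h : segreTangent K V v = segreTangent K V w) :
    ∃ c : K, PiTensorProduct.tprod K w = c • PiTensorProduct.tprod K v :=
  stmt11_general hk V hdim v w hw h
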